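/- For a propositional clause set: let DL be a set of clauses over a set of propositional variables, S a subset of the variables, and Neg an injective map from S to fresh variables not occurring in DL. Define the renamed clause of C = (H ← B) as ((H \ S) ∪ Neg(B ∩ S)) ← ((B \ S) ∪ Neg(H ∩ S)), and add for each p ∈ S occurring in DL the exclusion clause ⊥ ← p ∧ Neg(p). Then an interpretation I satisfies DL if and only if the interpretation I^S, which agrees with I on all original variables and sets Neg(p) true iff p is false in I, satisfies the renamed clause set R_S(DL). -/
import Mathlib


/-- A clause `H ← B`: head and body are finite sets of propositional variables. -/
structure Clause (α : Type) where
  head : Finset α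
  body : Finset α
deriving DecidableEq

variable {V : Type} [DecidableEq V]

/-- `I` satisfies the clause `H ← B`: if all body atoms are true, some head atom is true. -/
def satClause {α : Type} (I : α → Bool) (C : Clause α) : Prop :=
  (∀ b ∈ C.body, I b = true) → ∃ h ∈ C.head, I h = true

/-- `I` satisfies a set of clauses. -/
def satSet {α : Type} (I : α → Bool) (N : Set (Clause α)) : Prop :=
  ∀ C ∈ N, satClause I C

/-- Original variables embedded into the extended signature `V ⊕ V`
(`Sum.inl` = original variable, `Sum.inr` = its fresh `Neg`-variable). -/
def embedClause (C : Clause V) : Clause (V ⊕ V) :=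
  ⟨C.head.image Sum.inl, C.body.image Sum.inl⟩

/-- The renamed clause `((H \ S) ∪ Neg(B ∩ S)) ← ((B \ S) ∪ Neg(H ∩ S))`. -/
def renameClause (S : Finset V) (C : Clause V) : Clause (V ⊕ V) :=
  ⟨((C.head \ S).image Sum.inl) ∪ ((C.body ∩ S).image Sum.inr),
   ((C.body \ S).image Sum.inl) ∪ ((C.head ∩ S).image Sum.inr)⟩

/-- `p` occurs in the clause set `DL`. -/
def occursIn (p : V) (DL : Set (Clause V)) : Prop :=
  ∃ C ∈ DL, p ∈ C.head ∨ p ∈ C.body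

/-- The exclusion clause `⊥ ← p ∧ Neg(p)`. -/
def exclClause (p : V) : Clause (V ⊕ V) :=
  ⟨∅, {Sum.inl p, Sum.inr p}⟩

/-- `R_S(DL)`: every original clause, its renamed version, and the exclusion
clauses for variables of `S` occurring in `DL`. -/
def renameSet (S : Finset V) (DL : Set (Clause V)) : Set (Clause (V ⊕ V)) :=
  (embedClause '' DL) ∪ (renameClause S '' DL) ∪
    {C | ∃ p ∈ S, occursIn p DL ∧ C = exclClause p}

/-- The interpretation `I^S`: agrees with `I` on original variables and
sets `Neg(p)` true iff `p` is false in `I`. -/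
def extendI (I : V → Bool) : V ⊕ V → Bool
  | Sum.inl v => I v
  | Sum.inr v => !I v

lemma sat_embed_iff (I : V → Bool) (C : Clause V) :
    satClause (extendI I) (embedClause C) ↔ satClause I C := by
  simp only [satClause, embedClause, Finset.mem_image]
  constructor
  · intro h hb
    obtain ⟨x, hx⟩ := h (by rintro b ⟨a, ha, rfl⟩; exact hb a ha)
    rcases hx with ⟨⟨a, ha, rfl⟩, hv⟩
    exact ⟨a, ha, hv⟩
  · intro h hb
    obtain ⟨a, ha, hv⟩ := h (fun b hbb => hb _ ⟨b, hbb, rfl⟩)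
    exact ⟨Sum.inl a, ⟨a, ha, rfl⟩, hv⟩

lemma sat_rename_iff (S : Finset V) (I : V → Bool) (C : Clause V) :
    satClause (extendI I) (renameClause S C) ↔ satClause I C := by
  constructor
  · intro h hb
    by_cases hall : ∀ x ∈ C.head ∩ S, I x = false
    · have hside : ∀ b ∈ (renameClause S C).body, extendI I b = true := by
        intro b hbm
        simp only [renameClause, Finset.mem_union, Finset.mem_image] at hbm
        rcases hbm with ⟨a, ha, rfl⟩ | ⟨a, ha, rfl⟩
        · exact hb a (Finset.mem_sdiff.mp ha).1
        · simp [extendI, hall a ha]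
      obtain ⟨x, hx, hv⟩ := h hside
      simp only [renameClause, Finset.mem_union, Finset.mem_image] at hx
      rcases hx with ⟨a, ha, rfl⟩ | ⟨a, ha, rfl⟩
      · exact ⟨a, (Finset.mem_sdiff.mp ha).1, hv⟩
      · exact absurd hv (by simp [extendI, hb a (Finset.mem_inter.mp ha).1])
    · push_neg at hall
      obtain ⟨x, hx, hv⟩ := hall
      exact ⟨x, (Finset.mem_inter.mp hx).1, by simpa using hv⟩
  · intro h hb
    simp only [renameClause, Finset.mem_union, Finset.mem_image] at hb ⊢
    by_cases hall : ∀ b ∈ C.body ∩ S, I b = true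
    · have hside : ∀ b ∈ C.body, I b = true := by
        intro b hbb
        by_cases hbS : b ∈ S
        · exact hall b (Finset.mem_inter.mpr ⟨hbb, hbS⟩)
        · exact hb (Sum.inl b) (Or.inl ⟨b, Finset.mem_sdiff.mpr ⟨hbb, hbS⟩, rfl⟩)
      obtain ⟨a, ha, hv⟩ := h hside
      by_cases haS : a ∈ S
      · have := hb (Sum.inr a) (Or.inr ⟨a, Finset.mem_inter.mpr ⟨ha, haS⟩, rfl⟩)
        simp [extendI, hv] at this
      · exact ⟨Sum.inl a, Or.inl ⟨a, Finset.mem_sdiff.mpr ⟨ha, haS⟩, rfl⟩, hv⟩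
    · push_neg at hall
      obtain ⟨b, hbm, hbf⟩ := hall
      refine ⟨Sum.inr b, Or.inr ⟨b, hbm, rfl⟩, ?_⟩
      simp [extendI, Bool.not_eq_true] at hbf ⊢
      exact hbf

/-- `I ⊨ DL` iff `I^S ⊨ R_S(DL)`. -/
theorem sat_iff_extend_sat_rename (S : Finset V) (DL : Set (Clause V)) (I : V → Bool) :
    satSet I DL ↔ satSet (extendI I) (renameSet S DL) := by
  constructor
  · rintro h C hC
    rcases hC with (⟨D, hD, rfl⟩ | ⟨D, hD, rfl⟩) | ⟨p, _, _, rfl⟩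
    · exact (sat_embed_iff I D).mpr (h D hD)
    · exact (sat_rename_iff S I D).mpr (h D hD)
    · intro hb
      have h1 := hb (Sum.inl p) (by simp [exclClause])
      have h2 := hb (Sum.inr p) (by simp [exclClause])
      simp only [extendI] at h1 h2
      simp [h1] at h2
  · intro h C hC
    exact (sat_embed_iff I C).mp (h _ (Or.inl (Or.inl ⟨C, hC, rfl⟩)))
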